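/- arXiv:2109.04891 — 2 statements merged into one kernel-verified Lean document; each statement's English description precedes it below -/
import Mathlib

section
/- Let G be a d-regular graph (d ≥ 3) with girth c, and S ≥ 0 with 2S+1 < c. For any nonempty U ⊆ B(v,S) (for some vertex v), the isoperimetric number satisfies |∂U|/|U| ≥ d − 2 + 2(2−d)/(2 − d(d−1)^S), i.e., the Cheeger constant of G at scale S equals (d−2)·d·(d−1)^S/(d(d−1)^S − 2). -/
/-!
Since the girth exceeds `2S+1`, shortest paths from `v` to vertices of `B(v,S)` cannot close up
into a cycle: every `x ≠ v` in the ball has exactly one neighbour closer to `v`, and no edge joins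
two vertices at the same distance from `v`. Hence `U ⊆ B(v,S)` spans at most `|U| - 1` edges
(exactly `|B| - 1` when `U = B` is the ball), and `d`-regularity gives
`|∂U| = d|U| - 2e(U) ≥ (d-2)|U| + 2`, with equality for the ball. Each boundary edge of `B(v,t)`
leads to a distinct vertex at distance `t+1`, so `|B(v,t+1)| = |B(v,t)| + |∂B(v,t)|`, which solves
to `(d-2)|B(v,S)| + 2 = d(d-1)^S`. Finally `|∂U|/|U| ≥ d-2 + 2/|U| ≥ d-2 + 2/|B(v,S)|`, and the
ball attains this value.
-/

open scoped Classical

namespace SimpleGraph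

variable {V : Type*} {G : SimpleGraph V} {v x y y₁ y₂ : V}

theorem Walk.IsPath.eq_of_length_add_length_lt_egirth {p q : G.Walk x y} (hp : p.IsPath)
    (hq : q.IsPath) (h : ((p.length + q.length : ℕ) : ℕ∞) < G.egirth) : p = q := by
  by_contra hne
  obtain ⟨_, -, -, c, hc, hlen⟩ := hp.exists_isCycle_length_le_add_of_ne hq hne
  exact ((egirth_le_length hc).trans (by exact_mod_cast hlen)).not_gt h

theorem Walk.isPath_concat_of_length_eq_dist {p : G.Walk v y} (hp : p.length = G.dist v y)
    (h : G.Adj y x) (hle : G.dist v y ≤ G.dist v x) : (p.concat h).IsPath := by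
  refine (p.isPath_of_length_eq_dist hp).concat (fun hx => ?_) h
  have := p.length_takeUntil_lt_length hx h.ne.symm
  have := G.dist_le (p.takeUntil x hx)
  omega

theorem Walk.concat_eq_of_length_eq_dist {p : G.Walk v y} {q : G.Walk v x}
    (hp : p.length = G.dist v y) (hq : q.length = G.dist v x) (h : G.Adj y x)
    (hle : G.dist v y ≤ G.dist v x)
    (hg : ((G.dist v y + 1 + G.dist v x : ℕ) : ℕ∞) < G.egirth) : p.concat h = q :=
  (isPath_concat_of_length_eq_dist hp h hle).eq_of_length_add_length_lt_egirth
    (q.isPath_of_length_eq_dist hq) (by rwa [length_concat, hp, hq])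

theorem Adj.dist_eq_add_one_of_dist_le (h : G.Adj y x) (hy : G.Reachable v y)
    (hle : G.dist v y ≤ G.dist v x) (hg : ((2 * G.dist v x + 1 : ℕ) : ℕ∞) < G.egirth) :
    G.dist v x = G.dist v y + 1 := by
  obtain ⟨p, hp⟩ := hy.exists_walk_length_eq_dist
  obtain ⟨q, hq⟩ := (hy.trans h.reachable).exists_walk_length_eq_dist
  have hpq := Walk.concat_eq_of_length_eq_dist hp hq h hle
    ((Nat.cast_le.mpr (by omega)).trans_lt hg)
  have := congrArg Walk.length hpq
  rw [Walk.length_concat] at this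
  omega

theorem eq_of_adj_of_dist_add_one_eq (hx : G.Reachable v x) (h₁ : G.Adj y₁ x)
    (h₂ : G.Adj y₂ x) (hd₁ : G.dist v y₁ + 1 = G.dist v x) (hd₂ : G.dist v y₂ + 1 = G.dist v x)
    (hg : ((2 * G.dist v x : ℕ) : ℕ∞) < G.egirth) : y₁ = y₂ := by
  obtain ⟨p₁, hp₁⟩ := (hx.trans h₁.symm.reachable).exists_walk_length_eq_dist
  obtain ⟨p₂, hp₂⟩ := (hx.trans h₂.symm.reachable).exists_walk_length_eq_dist
  obtain ⟨q, hq⟩ := hx.exists_walk_length_eq_dist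
  have e₁ := Walk.concat_eq_of_length_eq_dist hp₁ hq h₁ (by omega)
    ((Nat.cast_le.mpr (by omega)).trans_lt hg)
  have e₂ := Walk.concat_eq_of_length_eq_dist hp₂ hq h₂ (by omega)
    ((Nat.cast_le.mpr (by omega)).trans_lt hg)
  exact (Walk.concat_inj (e₁.trans e₂.symm)).1

theorem Adj.dist_le_dist_add_one (h : G.Adj y x) : G.dist v x ≤ G.dist v y + 1 := by
  simpa [dist_eq_one_iff_adj.mpr h] using h.reachable.dist_triangle_right v

theorem Reachable.exists_adj_dist_add_one_eq (hx : G.Reachable v x) (hne : v ≠ x) :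
    ∃ y, G.Adj y x ∧ G.dist v y + 1 = G.dist v x := by
  obtain ⟨q, hq⟩ := hx.exists_walk_length_eq_dist
  have hnil : ¬q.Nil := fun h => hne h.eq
  have hadj := q.adj_penultimate hnil
  refine ⟨q.penultimate, hadj, le_antisymm ?_ ?_⟩
  · have := G.dist_le q.dropLast
    have := q.length_dropLast_add_one hnil
    omega
  · exact hadj.dist_le_dist_add_one

open Finset

section Counting

variable [DecidableRel G.Adj] {d S : ℕ} {u : V} {U : Finset V}

theorem card_interedges_eq_sum (s t : Finset V) :
    #(G.interedges s t) = ∑ a ∈ s, #{b ∈ t | G.Adj a b} := by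
  rw [interedges_def, card_filter, sum_product]
  simp only [card_filter]

variable [Fintype V]

theorem IsRegularOfDegree.card_interedges_add_card_interedges_compl [DecidableEq V]
    (hreg : G.IsRegularOfDegree d) (U : Finset V) :
    #(G.interedges U U) + #(G.interedges U Uᶜ) = d * #U := by
  rw [card_interedges_eq_sum, card_interedges_eq_sum, ← sum_add_distrib, mul_comm,
    ← smul_eq_mul, ← sum_const]
  refine sum_congr rfl fun a _ => ?_
  have h₁ : {b ∈ U | G.Adj a b} = {b ∈ G.neighborFinset a | b ∈ U} := by
    ext; simp [and_comm]
  have h₂ : {b ∈ Uᶜ | G.Adj a b} = {b ∈ G.neighborFinset a | b ∉ U} := by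
    ext; simp [and_comm]
  rw [h₁, h₂, card_filter_add_card_filter_not, card_neighborFinset_eq_degree, hreg a]

/-- `B(v,S)`. The reachability conjunct matters: `G.dist v u = 0` for unreachable `u`. -/
noncomputable def closedBall (G : SimpleGraph V) (v : V) (S : ℕ) : Finset V :=
  {u | G.Reachable v u ∧ G.dist v u ≤ S}

omit [DecidableRel G.Adj] in
@[simp]
theorem mem_closedBall : u ∈ G.closedBall v S ↔ G.Reachable v u ∧ G.dist v u ≤ S := by
  simp [closedBall]

noncomputable def edgeBoundary (G : SimpleGraph V) [Fintype G.edgeSet] (U : Finset V) :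
    Finset (Sym2 V) :=
  {e ∈ G.edgeFinset | ∃ a b, e = s(a, b) ∧ a ∈ U ∧ b ∉ U}

theorem card_edgeBoundary [DecidableEq V] (U : Finset V) :
    #(G.edgeBoundary U) = #(G.interedges U Uᶜ) := by
  refine (card_bij (fun e _ => s(e.1, e.2)) ?_ ?_ ?_).symm
  · rintro ⟨a, b⟩ he
    rw [mem_interedges_iff, mem_compl] at he
    simpa [edgeBoundary] using ⟨he.2.2, a, b, Or.inl ⟨rfl, rfl⟩, he.1, he.2.1⟩
  · rintro ⟨a, b⟩ he ⟨a', b'⟩ he' hee'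
    rw [mem_interedges_iff, mem_compl] at he he'
    rcases Sym2.eq_iff.mp hee' with ⟨rfl, rfl⟩ | ⟨rfl, -⟩
    · rfl
    · exact absurd he.1 he'.2.1
  · intro e he
    simp only [edgeBoundary, mem_filter] at he
    obtain ⟨he, a, b, rfl, ha, hb⟩ := he
    exact ⟨(a, b), by simpa [mem_interedges_iff, ha, hb] using he, rfl⟩

theorem dist_ne_of_mem_interedges (hS : ((2 * S + 1 : ℕ) : ℕ∞) < G.egirth)
    (hU : U ⊆ G.closedBall v S) {e : V × V} (he : e ∈ G.interedges U U) :
    G.dist v e.1 ≠ G.dist v e.2 := by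
  rw [mem_interedges_iff] at he
  obtain ⟨hr, hd⟩ := mem_closedBall.mp (hU he.1)
  intro h
  have := he.2.2.dist_eq_add_one_of_dist_le hr h.le ((Nat.cast_le.mpr (by omega)).trans_lt hS)
  omega

/-- No internal pair is horizontal, and an upward pair `(a, b)` is determined by `b`, whose
neighbour closer to `v` is unique. -/
theorem card_interedges_self_eq_two_mul (hS : ((2 * S + 1 : ℕ) : ℕ∞) < G.egirth)
    (hU : U ⊆ G.closedBall v S) :
    #(G.interedges U U) = 2 * #{b ∈ U | ∃ a ∈ U, G.Adj a b ∧ G.dist v a < G.dist v b} := by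
  have hdown : #{e ∈ G.interedges U U | ¬G.dist v e.1 < G.dist v e.2}
      = #{e ∈ G.interedges U U | G.dist v e.1 < G.dist v e.2} := by
    have : Std.Symm G.Adj := G.symm
    refine card_nbij' Prod.swap Prod.swap (fun e he => ?_) (fun e he => ?_)
      (fun _ _ => rfl) (fun _ _ => rfl) <;>
    simp only [mem_coe, mem_filter, Prod.fst_swap, Prod.snd_swap] at he ⊢
    · exact ⟨Rel.swap_mem_interedges_iff.mpr he.1,
        (not_lt.mp he.2).lt_of_ne (dist_ne_of_mem_interedges hS hU he.1).symm⟩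
    · exact ⟨Rel.swap_mem_interedges_iff.mpr he.1, he.2.not_gt⟩
  have hup : #{e ∈ G.interedges U U | G.dist v e.1 < G.dist v e.2}
      = #{b ∈ U | ∃ a ∈ U, G.Adj a b ∧ G.dist v a < G.dist v b} := by
    refine card_bij (fun e _ => e.2) ?_ ?_ ?_
    · rintro ⟨a, b⟩ he
      simp only [mem_filter, mem_interedges_iff] at he ⊢
      exact ⟨he.1.2.1, a, he.1.1, he.1.2.2, he.2⟩
    · rintro ⟨a, b⟩ he ⟨a', b'⟩ he' (rfl : b = b')
      simp only [mem_filter, mem_interedges_iff] at he he'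
      obtain ⟨hr, hd⟩ := mem_closedBall.mp (hU he.1.2.1)
      have h₁ := he.1.2.2.dist_le_dist_add_one (v := v)
      have h₂ := he'.1.2.2.dist_le_dist_add_one (v := v)
      rw [eq_of_adj_of_dist_add_one_eq hr he.1.2.2 he'.1.2.2 (by omega) (by omega)
        ((Nat.cast_le.mpr (by omega)).trans_lt hS)]
    · intro b hb
      obtain ⟨hb, a, ha, hab, hlt⟩ := mem_filter.mp hb
      exact ⟨(a, b), by simp [mem_interedges_iff, ha, hb, hab, hlt], rfl⟩
  rw [← card_filter_add_card_filter_not (s := G.interedges U U)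
    (fun e => G.dist v e.1 < G.dist v e.2), hdown, hup, two_mul]

theorem card_interedges_self_add_two_le (hS : ((2 * S + 1 : ℕ) : ℕ∞) < G.egirth)
    (hU : U ⊆ G.closedBall v S) (hne : U.Nonempty) : #(G.interedges U U) + 2 ≤ 2 * #U := by
  obtain ⟨m, hm, hmin⟩ := U.exists_min_image (G.dist v) hne
  have hsub : {b ∈ U | ∃ a ∈ U, G.Adj a b ∧ G.dist v a < G.dist v b} ⊆ U.erase m := by
    intro b hb
    obtain ⟨hb, a, ha, -, hlt⟩ := mem_filter.mp hb
    exact mem_erase.mpr ⟨by rintro rfl; exact (hmin a ha).not_gt hlt, hb⟩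
  have := card_le_card hsub
  rw [card_erase_of_mem hm] at this
  have := hne.card_pos
  rw [card_interedges_self_eq_two_mul hS hU]
  omega

theorem card_interedges_closedBall_self_add_two (hS : ((2 * S + 1 : ℕ) : ℕ∞) < G.egirth) :
    #(G.interedges (G.closedBall v S) (G.closedBall v S)) + 2 = 2 * #(G.closedBall v S) := by
  have hv : v ∈ G.closedBall v S := by simp
  have hup : {b ∈ G.closedBall v S | ∃ a ∈ G.closedBall v S, G.Adj a b ∧ G.dist v a < G.dist v b}
      = (G.closedBall v S).erase v := by
    ext b
    simp only [mem_filter, mem_erase]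
    constructor
    · rintro ⟨hb, a, -, -, hlt⟩
      exact ⟨by rintro rfl; simp at hlt, hb⟩
    · rintro ⟨hne, hb⟩
      obtain ⟨hr, hd⟩ := mem_closedBall.mp hb
      obtain ⟨a, hab, hda⟩ := hr.exists_adj_dist_add_one_eq (Ne.symm hne)
      exact ⟨hb, a, mem_closedBall.mpr ⟨hr.trans hab.symm.reachable, by omega⟩, hab, by omega⟩
  rw [card_interedges_self_eq_two_mul hS subset_rfl, hup, card_erase_of_mem hv]
  have := card_pos.mpr ⟨v, hv⟩
  omega

theorem IsRegularOfDegree.sub_two_mul_card_add_two_le_card_edgeBoundary [DecidableEq V]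
    (hreg : G.IsRegularOfDegree d) (hS : ((2 * S + 1 : ℕ) : ℕ∞) < G.egirth)
    (hU : U ⊆ G.closedBall v S) (hne : U.Nonempty) :
    ((d : ℝ) - 2) * #U + 2 ≤ #(G.edgeBoundary U) := by
  have h₁ := hreg.card_interedges_add_card_interedges_compl U
  have h₂ := card_interedges_self_add_two_le hS hU hne
  rw [card_edgeBoundary]
  have : (d * #U + 2 : ℝ) ≤ #(G.interedges U Uᶜ) + 2 * #U := by exact_mod_cast (by omega)
  linarith

theorem IsRegularOfDegree.card_edgeBoundary_closedBall_add_two_mul [DecidableEq V]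
    (hreg : G.IsRegularOfDegree d) (hS : ((2 * S + 1 : ℕ) : ℕ∞) < G.egirth) :
    #(G.edgeBoundary (G.closedBall v S)) + 2 * #(G.closedBall v S)
      = d * #(G.closedBall v S) + 2 := by
  have h₁ := hreg.card_interedges_add_card_interedges_compl (G.closedBall v S)
  have h₂ := card_interedges_closedBall_self_add_two (v := v) hS
  rw [card_edgeBoundary]
  omega

theorem card_closedBall_succ [DecidableEq V] (hS : ((2 * (S + 1) : ℕ) : ℕ∞) < G.egirth) :
    #(G.closedBall v (S + 1)) = #(G.closedBall v S) + #(G.edgeBoundary (G.closedBall v S)) := by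
  have hsub : G.closedBall v S ⊆ G.closedBall v (S + 1) := fun u hu => by
    simp only [mem_closedBall] at hu ⊢
    exact ⟨hu.1, hu.2.trans S.le_succ⟩
  rw [← card_sdiff_add_card_eq_card hsub, add_comm, card_edgeBoundary]
  congr 1
  symm
  refine card_bij (fun e _ => e.2) ?_ ?_ ?_
  · rintro ⟨a, b⟩ he
    simp only [mem_interedges_iff, mem_compl, mem_closedBall] at he
    have := he.2.2.dist_le_dist_add_one (v := v)
    simp only [mem_sdiff, mem_closedBall]
    exact ⟨⟨he.1.1.trans he.2.2.reachable, by omega⟩, he.2.1⟩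
  · rintro ⟨a, b⟩ he ⟨a', b'⟩ he' (rfl : b = b')
    simp only [mem_interedges_iff, mem_compl, mem_closedBall] at he he'
    have hr := he.1.1.trans he.2.2.reachable
    have h₁ := he.2.2.dist_le_dist_add_one (v := v)
    have h₂ := he'.2.2.dist_le_dist_add_one (v := v)
    have hb : S < G.dist v b := not_le.mp fun h => he.2.1 ⟨hr, h⟩
    rw [eq_of_adj_of_dist_add_one_eq hr he.2.2 he'.2.2 (by omega) (by omega)
      ((Nat.cast_le.mpr (by omega)).trans_lt hS)]
  · intro b hb
    simp only [mem_sdiff, mem_closedBall] at hb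
    obtain ⟨⟨hr, hd⟩, hb⟩ := hb
    have hlt : S < G.dist v b := not_le.mp fun h => hb ⟨hr, h⟩
    obtain ⟨a, hab, hda⟩ := hr.exists_adj_dist_add_one_eq (by rintro rfl; simp at hlt)
    refine ⟨(a, b), ?_, rfl⟩
    simp only [mem_interedges_iff, mem_compl, mem_closedBall]
    exact ⟨⟨hr.trans hab.symm.reachable, by omega⟩, hb, hab⟩

theorem IsRegularOfDegree.card_closedBall [DecidableEq V] (hreg : G.IsRegularOfDegree d)
    (hS : ((2 * S + 1 : ℕ) : ℕ∞) < G.egirth) :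
    ((d : ℝ) - 2) * #(G.closedBall v S) + 2 = d * (d - 1) ^ S := by
  induction S with
  | zero =>
    have hball : G.closedBall v 0 = {v} := by
      ext u
      simp only [mem_closedBall, mem_singleton, Nat.le_zero]
      refine ⟨fun ⟨hr, h⟩ => (hr.dist_eq_zero_iff.mp h).symm, ?_⟩
      rintro rfl
      simp
    simp [hball]
  | succ S ih =>
    have hS' : ((2 * S + 1 : ℕ) : ℕ∞) < G.egirth := (Nat.cast_le.mpr (by omega)).trans_lt hS
    have hsucc : (#(G.closedBall v (S + 1)) : ℝ)
        = #(G.closedBall v S) + #(G.edgeBoundary (G.closedBall v S)) := by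
      exact_mod_cast card_closedBall_succ ((Nat.cast_le.mpr (by omega)).trans_lt hS)
    have hbd : (#(G.edgeBoundary (G.closedBall v S)) + 2 * #(G.closedBall v S) : ℝ)
        = d * #(G.closedBall v S) + 2 := by
      exact_mod_cast hreg.card_edgeBoundary_closedBall_add_two_mul hS'
    rw [hsucc, pow_succ]
    linear_combination (↑d - 1) * ih hS' + (↑d - 2) * hbd

theorem IsRegularOfDegree.le_card_edgeBoundary_div_card [DecidableEq V]
    (hreg : G.IsRegularOfDegree d) (hS : ((2 * S + 1 : ℕ) : ℕ∞) < G.egirth)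
    (hU : U ⊆ G.closedBall v S) (hne : U.Nonempty) :
    (d : ℝ) - 2 + 2 * (2 - d) / (2 - d * (d - 1) ^ S) ≤ #(G.edgeBoundary U) / #U := by
  rcases eq_or_ne (d : ℝ) 2 with hd | hd
  · simp only [hd, sub_self, mul_zero, zero_div, add_zero]
    positivity
  have hU0 : (0 : ℝ) < #U := by exact_mod_cast hne.card_pos
  have hball := hreg.card_closedBall (v := v) hS
  calc (d : ℝ) - 2 + 2 * (2 - d) / (2 - d * (d - 1) ^ S)
      = d - 2 + 2 / #(G.closedBall v S) := by
        rw [← hball, show (2 : ℝ) - ((d - 2) * #(G.closedBall v S) + 2)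
          = #(G.closedBall v S) * (2 - d) by ring, mul_div_mul_right _ _ (sub_ne_zero.mpr hd.symm)]
    _ ≤ d - 2 + 2 / #U := by gcongr
    _ ≤ #(G.edgeBoundary U) / #U := by
        rw [le_div_iff₀ hU0, add_mul, div_mul_cancel₀ _ hU0.ne']
        exact hreg.sub_two_mul_card_add_two_le_card_edgeBoundary hS hU hne

theorem IsRegularOfDegree.card_edgeBoundary_closedBall_div_card [DecidableEq V]
    (hreg : G.IsRegularOfDegree d) (hd : d ≠ 2) (hS : ((2 * S + 1 : ℕ) : ℕ∞) < G.egirth) :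
    (#(G.edgeBoundary (G.closedBall v S)) : ℝ) / #(G.closedBall v S)
      = ((d : ℝ) - 2) * d * (d - 1) ^ S / (d * (d - 1) ^ S - 2) := by
  have hd2 : (d : ℝ) - 2 ≠ 0 := sub_ne_zero.mpr (by exact_mod_cast hd)
  have hball := hreg.card_closedBall (v := v) hS
  have hbd : (#(G.edgeBoundary (G.closedBall v S)) + 2 * #(G.closedBall v S) : ℝ)
      = d * #(G.closedBall v S) + 2 := by
    exact_mod_cast hreg.card_edgeBoundary_closedBall_add_two_mul hS
  have hB0 : (#(G.closedBall v S) : ℝ) ≠ 0 := by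
    exact_mod_cast (card_pos.mpr ⟨v, by simp⟩).ne'
  rw [div_eq_div_iff hB0 (by rw [← hball]; simp [hd2, hB0])]
  linear_combination (d * (d - 1) ^ S - 2 : ℝ) * hbd - 2 * hball

end Counting

end SimpleGraph

open SimpleGraph Finset

/-- For a `d`-regular graph (`d ≥ 3`) of girth `c` and `S` with `2S+1 < c`: every
nonempty `U` contained in a ball `B(v,S)` satisfies
`|∂U|/|U| ≥ d − 2 + 2(2−d)/(2 − d(d−1)^S)`, and the ball `B(v,S)` itself realizes the
value `(d−2)·d·(d−1)^S/(d(d−1)^S − 2)`, so the Cheeger constant of `G` at scale `S`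
equals `(d−2)·d·(d−1)^S/(d(d−1)^S − 2)`. -/
theorem stmt14 {V : Type*} [Fintype V] [DecidableEq V]
    (G : SimpleGraph V) [DecidableRel G.Adj]
    (d S : ℕ) (hd : 3 ≤ d) (hreg : G.IsRegularOfDegree d)
    (hgirth : ((2 * S + 1 : ℕ) : ℕ∞) < G.girth) :
    (∀ (v : V) (U : Finset V), U.Nonempty →
      (∀ u ∈ U, G.Reachable v u ∧ G.dist v u ≤ S) →
      (d : ℝ) - 2 + 2 * (2 - (d : ℝ)) / (2 - d * ((d : ℝ) - 1) ^ S)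
        ≤ ((G.edgeFinset.filter fun e => ∃ a b, e = s(a, b) ∧ a ∈ U ∧ b ∉ U).card : ℝ)
            / (U.card : ℝ))
    ∧ ∀ v : V,
      ((G.edgeFinset.filter fun e => ∃ a b, e = s(a, b)
          ∧ (G.Reachable v a ∧ G.dist v a ≤ S) ∧ ¬(G.Reachable v b ∧ G.dist v b ≤ S)).card : ℝ)
        / ((Finset.univ.filter fun u => G.Reachable v u ∧ G.dist v u ≤ S).card : ℝ)
      = ((d : ℝ) - 2) * d * ((d : ℝ) - 1) ^ S / ((d : ℝ) * ((d : ℝ) - 1) ^ S - 2) := by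
  have hS : ((2 * S + 1 : ℕ) : ℕ∞) < G.egirth := hgirth.trans_le G.egirth.natCast_toNat_le_self
  refine ⟨fun v U hne hU => ?_, fun v => ?_⟩
  · convert hreg.le_card_edgeBoundary_div_card hS (fun u hu => mem_closedBall.mpr (hU u hu)) hne
      using 4
    ext
    simp [edgeBoundary]
  · convert hreg.card_edgeBoundary_closedBall_div_card (v := v) (by omega) hS using 4 <;>
      ext <;> simp [edgeBoundary]
end

section
/- Let G = (V,E) be a finite graph with scale 𝒮, let K be the set of pairs (η, κ) ∈ ℝ^V × ℝ≥0^E satisfying ∑_e κ(e) ≤ 1 and the weighted isoperimetric inequalities ∑_{i∈T} η_i ≤ ∑_{e∈∂T} κ(e) for all T contained in some member of 𝒮. Then for each (η,κ) ∈ K and each k ∈ V there exists a pseudo-flow φ_k : E → ℝ with |φ_k(e)| ≤ κ(e) for all e and net supply at least η_i at every vertex i of the member S̄_k ∈ 𝒮, i.e., the feasible region of the pseudo-flow problem projects onto K. -/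
/-!
If no pseudo-flow exists, Hahn–Banach separates `η` from the closed convex set of supplies
achievable by `κ`-bounded flows (and anything smaller on `S̄_k`). The separating functional gives
weights `y ≥ 0` supported on `S̄_k` with `∑ η y > max_φ ∑ φ ∇y = ∑ κ |∇y|`. Peeling off the
level sets of `y` one at a time writes both sides as the same nonnegative combination of the two
sides of the isoperimetric inequalities, a contradiction.
-/

open Finset Pointwise

section

variable {V : Type*} [DecidableEq V]

def edgeBoundary (E : Finset (V × V)) (T : Finset V) : Finset (V × V) :=
  E.filter fun e => (e.1 ∈ T ∧ e.2 ∉ T) ∨ (e.1 ∉ T ∧ e.2 ∈ T)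

def netSupply (E : Finset (V × V)) : (V × V → ℝ) →ₗ[ℝ] V → ℝ where
  toFun φ i := (∑ e ∈ E.filter fun e => e.2 = i, φ e) - ∑ e ∈ E.filter fun e => e.1 = i, φ e
  map_add' φ ψ := by
    ext i
    simp only [Pi.add_apply, sum_add_distrib]
    ring
  map_smul' c φ := by
    ext i
    simp only [Pi.smul_apply, smul_eq_mul, ← mul_sum, RingHom.id_apply]
    ring

theorem sum_netSupply_mul [Fintype V] (E : Finset (V × V)) (φ : V × V → ℝ) (y : V → ℝ) :
    ∑ i, netSupply E φ i * y i = ∑ e ∈ E, φ e * (y e.2 - y e.1) := by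
  have fiberwise (g : V × V → V) :
      ∑ i, (∑ e ∈ E.filter fun e => g e = i, φ e) * y i = ∑ e ∈ E, φ e * y (g e) := by
    rw [← sum_fiberwise E g]
    refine sum_congr rfl fun i _ => ?_
    rw [sum_mul]
    exact sum_congr rfl fun e he => by rw [(mem_filter.mp he).2]
  simp only [netSupply, LinearMap.coe_mk, AddHom.coe_mk, sub_mul, sum_sub_distrib, mul_sub]
  rw [fiberwise Prod.snd, fiberwise Prod.fst]

theorem abs_sub_add_ite_mem {T : Finset V} {y : V → ℝ} (hy0 : ∀ i, 0 ≤ y i)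
    (hyT : ∀ i ∉ T, y i = 0) {m : ℝ} (hm : 0 ≤ m) (a b : V) :
    |(y b + if b ∈ T then m else 0) - (y a + if a ∈ T then m else 0)|
      = |y b - y a| + if (a ∈ T ∧ b ∉ T) ∨ (a ∉ T ∧ b ∈ T) then m else 0 := by
  have ha := hy0 a
  have hb := hy0 b
  by_cases haT : a ∈ T <;> by_cases hbT : b ∈ T
  · simp [haT, hbT]
  · simp only [haT, hbT, hyT b hbT, if_true, if_false]
    rw [abs_of_nonpos (by linarith), abs_of_nonpos (by linarith)]
    simp
  · simp only [haT, hbT, hyT a haT, if_true, if_false]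
    rw [abs_of_nonneg (by linarith), abs_of_nonneg (by linarith)]
    simp
  · simp [haT, hbT, hyT a haT, hyT b hbT]

theorem sum_mul_abs_sub_add_ite_mem (E : Finset (V × V)) (κ : V × V → ℝ) {T : Finset V}
    {y : V → ℝ} (hy0 : ∀ i, 0 ≤ y i) (hyT : ∀ i ∉ T, y i = 0) {m : ℝ} (hm : 0 ≤ m) :
    ∑ e ∈ E, κ e * |(y e.2 + if e.2 ∈ T then m else 0) - (y e.1 + if e.1 ∈ T then m else 0)|
      = ∑ e ∈ E, κ e * |y e.2 - y e.1| + m * ∑ e ∈ edgeBoundary E T, κ e := by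
  simp only [abs_sub_add_ite_mem hy0 hyT hm, mul_add, sum_add_distrib, edgeBoundary,
    sum_filter, mul_ite, mul_zero, mul_comm m, sum_mul, ite_mul, zero_mul]

theorem sum_mul_add_ite_mem (η : V → ℝ) {S T : Finset V} (hTS : T ⊆ S) (y : V → ℝ) (m : ℝ) :
    ∑ i ∈ S, η i * (y i + if i ∈ T then m else 0) = ∑ i ∈ S, η i * y i + m * ∑ i ∈ T, η i := by
  simp only [mul_add, sum_add_distrib, mul_ite, mul_zero, sum_ite_mem, inter_eq_right.mpr hTS,
    mul_comm m, sum_mul]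

/-- Discrete coarea argument: summed over the level sets of `y`, the isoperimetric inequalities
give this one. -/
theorem sum_mul_le_sum_mul_abs_sub (E : Finset (V × V)) {S : Finset V} {η : V → ℝ}
    {κ : V × V → ℝ} (hκ0 : ∀ e, 0 ≤ κ e)
    (hiso : ∀ T ⊆ S, ∑ i ∈ T, η i ≤ ∑ e ∈ edgeBoundary E T, κ e)
    {y : V → ℝ} (hy0 : ∀ i, 0 ≤ y i) (hyS : ∀ i ∉ S, y i = 0) :
    ∑ i ∈ S, η i * y i ≤ ∑ e ∈ E, κ e * |y e.2 - y e.1| := by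
  induction hn : #{i ∈ S | 0 < y i} using Nat.strong_induction_on generalizing y with
  | _ n ih =>
    set T := {i ∈ S | 0 < y i}
    have hyT : ∀ i ∉ T, y i = 0 := fun i hi => by
      by_cases hiS : i ∈ S
      · exact (hy0 i).antisymm' (not_lt.mp fun hpos => hi (mem_filter.mpr ⟨hiS, hpos⟩))
      · exact hyS i hiS
    rcases T.eq_empty_or_nonempty with hT | hT
    · rw [sum_eq_zero fun i _ => by rw [hyT i (hT ▸ notMem_empty i), mul_zero]]
      exact sum_nonneg fun e _ => mul_nonneg (hκ0 e) (abs_nonneg _)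
    obtain ⟨i₀, hi₀, hmin⟩ := T.exists_min_image y hT
    have hm : 0 < y i₀ := (mem_filter.mp hi₀).2
    -- lower `y` by its least positive value on its support `T`
    set y' : V → ℝ := fun i => if i ∈ T then y i - y i₀ else 0
    have hy' : y = fun i => y' i + if i ∈ T then y i₀ else 0 := by
      ext i
      by_cases hi : i ∈ T
      · simp [y', hi]
      · simp [y', hi, hyT i hi]
    have hy'0 : ∀ i, 0 ≤ y' i := fun i => by
      by_cases hi : i ∈ T
      · simpa [y', hi] using hmin i hi
      · simp [y', hi]
    have hy'T : ∀ i ∉ T, y' i = 0 := fun i hi => by simp [y', hi]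
    have hy'S : ∀ i ∉ S, y' i = 0 := fun i hi => hy'T i fun h => hi (mem_filter.mp h).1
    have hcard : #{i ∈ S | 0 < y' i} < n := by
      rw [← hn]
      refine card_lt_card ⟨fun i hi => ?_, fun h => ?_⟩
      · by_contra hiT
        simp [y', hiT] at hi
      · simpa [y', hi₀] using (mem_filter.mp (h hi₀)).2
    rw [hy', sum_mul_add_ite_mem η (filter_subset _ S),
      sum_mul_abs_sub_add_ite_mem E κ hy'0 hy'T hm.le]
    exact add_le_add (ih _ hcard hy'0 hy'S rfl)
      (mul_le_mul_of_nonneg_left (hiso T (filter_subset _ S)) hm.le)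

theorem nonpos_of_forall_add_mul_lt {a b u : ℝ} (h : ∀ t : ℝ, 0 ≤ t → a + t * b < u) : b ≤ 0 := by
  by_contra! hb
  have := h ((|u - a| + 1) / b) (by positivity)
  rw [div_mul_cancel₀ _ hb.ne'] at this
  linarith [le_abs_self (u - a)]

theorem exists_weights_of_notMem_add_nonpos [Fintype V] {C : Set (V → ℝ)} (hCc : IsCompact C)
    (hCconv : Convex ℝ C) (S : Finset V) {η : V → ℝ}
    (hη : η ∉ C + {z | ∀ i ∈ S, z i ≤ 0}) :
    ∃ y : V → ℝ, (∀ i, 0 ≤ y i) ∧ (∀ i ∉ S, y i = 0) ∧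
      ∀ c ∈ C, ∑ i, c i * y i < ∑ i ∈ S, η i * y i := by
  rcases C.eq_empty_or_nonempty with rfl | ⟨c₀, hc₀⟩
  · exact ⟨0, fun _ => le_rfl, fun _ _ => rfl, by simp⟩
  set K : Set (V → ℝ) := {z | ∀ i ∈ S, z i ≤ 0}
  have hKclosed : IsClosed K := by
    simp only [K, Set.ofPred_forall]
    exact isClosed_iInter fun i => isClosed_iInter fun _ =>
      isClosed_le (continuous_apply i) continuous_const
  have hKconv : Convex ℝ K := fun z hz w hw a b ha hb _ i hi => by
    simp only [Pi.add_apply, Pi.smul_apply, smul_eq_mul]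
    nlinarith [hz i hi, hw i hi]
  obtain ⟨f, u, hfD, hfη⟩ := geometric_hahn_banach_closed_point (hCconv.add hKconv)
    (hKclosed.add_left_of_isCompact hCc) hη
  set y : V → ℝ := fun i => f (Pi.single i 1)
  have hf (x : V → ℝ) : f x = ∑ i, x i * y i := by
    refine ((f : (V → ℝ) →ₗ[ℝ] ℝ).pi_apply_eq_sum_univ x).trans (sum_congr rfl fun i _ => ?_)
    have : (Pi.single i 1 : V → ℝ) = fun j => if i = j then 1 else 0 := by
      ext j
      simp [Pi.single_apply, eq_comm]
    simp [y, this]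
  -- `K` is a cone, so `f` is bounded above on it only if `f ≤ 0` there
  have hfK (z) (hz : z ∈ K) : f z ≤ 0 := nonpos_of_forall_add_mul_lt fun t ht => by
    have htz : t • z ∈ K := fun i hi => by
      simpa using mul_nonpos_of_nonneg_of_nonpos ht (hz i hi)
    simpa using hfD _ (Set.add_mem_add hc₀ htz)
  have hy0 (i) : 0 ≤ y i := by
    have : -Pi.single i (1 : ℝ) ∈ K := fun j _ => by by_cases h : j = i <;> simp [h]
    simpa [y] using hfK _ this
  have hyS (i) (hi : i ∉ S) : y i = 0 := by
    have : Pi.single i (1 : ℝ) ∈ K := fun j hj => by simp [ne_of_mem_of_not_mem hj hi]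
    exact (hfK _ this).antisymm (hy0 i)
  refine ⟨y, hy0, hyS, fun c hc => ?_⟩
  calc ∑ i, c i * y i = f c := (hf c).symm
    _ < u := hfD _ (Set.subset_add_left C (t := K) (fun _ _ => le_rfl) hc)
    _ < f η := hfη
    _ = ∑ i ∈ S, η i * y i := by
      rw [hf]
      exact (sum_subset (subset_univ S) fun i _ hi => by rw [hyS i hi, mul_zero]).symm

theorem exists_mem_Icc_sum_netSupply_mul_eq [Fintype V] (E : Finset (V × V)) {κ : V × V → ℝ}
    (hκ0 : ∀ e, 0 ≤ κ e) (y : V → ℝ) :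
    ∃ φ ∈ Set.Icc (-κ) κ, ∑ i, netSupply E φ i * y i = ∑ e ∈ E, κ e * |y e.2 - y e.1| := by
  refine ⟨fun e => if y e.1 ≤ y e.2 then κ e else -κ e, ⟨fun e => ?_, fun e => ?_⟩, ?_⟩
  · show -κ e ≤ if y e.1 ≤ y e.2 then κ e else -κ e
    split_ifs <;> linarith [hκ0 e]
  · show (if y e.1 ≤ y e.2 then κ e else -κ e) ≤ κ e
    split_ifs <;> linarith [hκ0 e]
  rw [sum_netSupply_mul]
  refine sum_congr rfl fun e _ => ?_
  split_ifs with h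
  · rw [abs_of_nonneg (sub_nonneg.mpr h)]
  · rw [abs_of_neg (sub_neg.mpr (not_le.mp h))]
    ring

theorem exists_dual_certificate [Fintype V] (E : Finset (V × V)) (S : Finset V) (η : V → ℝ)
    {κ : V × V → ℝ} (hκ0 : ∀ e, 0 ≤ κ e)
    (hno : ¬∃ φ : V × V → ℝ, (∀ e ∈ E, |φ e| ≤ κ e) ∧ ∀ i ∈ S, η i ≤ netSupply E φ i) :
    ∃ y : V → ℝ, (∀ i, 0 ≤ y i) ∧ (∀ i ∉ S, y i = 0) ∧
      ∑ e ∈ E, κ e * |y e.2 - y e.1| < ∑ i ∈ S, η i * y i := by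
  have hη : η ∉ netSupply E '' Set.Icc (-κ) κ + {z | ∀ i ∈ S, z i ≤ 0} := by
    rintro ⟨_, ⟨φ, ⟨hφl, hφu⟩, rfl⟩, z, hz, hsum⟩
    refine hno ⟨φ, fun e _ => abs_le.mpr ⟨hφl e, hφu e⟩, fun i hi => ?_⟩
    have : netSupply E φ i + z i = η i := congrFun hsum i
    linarith [hz i hi]
  obtain ⟨y, hy0, hyS, hy⟩ := exists_weights_of_notMem_add_nonpos
    (isCompact_Icc.image (netSupply E).continuous_of_finiteDimensional)
    ((convex_Icc _ _).linear_image _) S hη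
  obtain ⟨φ, hφ, hφy⟩ := exists_mem_Icc_sum_netSupply_mul_eq E hκ0 y
  exact ⟨y, hy0, hyS, hφy ▸ hy _ ⟨φ, hφ, rfl⟩⟩

theorem exists_pseudoFlow_of_isoperimetric [Fintype V] (E : Finset (V × V)) (S : Finset V)
    (η : V → ℝ) {κ : V × V → ℝ} (hκ0 : ∀ e, 0 ≤ κ e)
    (hiso : ∀ T ⊆ S, ∑ i ∈ T, η i ≤ ∑ e ∈ edgeBoundary E T, κ e) :
    ∃ φ : V × V → ℝ, (∀ e ∈ E, |φ e| ≤ κ e) ∧ ∀ i ∈ S, η i ≤ netSupply E φ i := by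
  by_contra hno
  obtain ⟨y, hy0, hyS, hlt⟩ := exists_dual_certificate E S η hκ0 hno
  exact hlt.not_ge (sum_mul_le_sum_mul_abs_sub E hκ0 hiso hy0 hyS)

end

theorem stmt15_general {V : Type*} [Fintype V] [DecidableEq V]
    (E : Finset (V × V))
    (Sbar : V → Finset V)
    (η : V → ℝ) (κ : V × V → ℝ)
    (hκ0 : ∀ e, 0 ≤ κ e)
    (hiso : ∀ k : V, ∀ T ⊆ Sbar k,
      ∑ i ∈ T, η i
        ≤ ∑ e ∈ E.filter fun e => (e.1 ∈ T ∧ e.2 ∉ T) ∨ (e.1 ∉ T ∧ e.2 ∈ T), κ e) :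
    ∀ k : V, ∃ φ : V × V → ℝ,
      (∀ e ∈ E, |φ e| ≤ κ e) ∧
      ∀ i ∈ Sbar k,
        η i ≤ (∑ e ∈ E.filter fun e => e.2 = i, φ e)
          - ∑ e ∈ E.filter fun e => e.1 = i, φ e :=
  fun k => exists_pseudoFlow_of_isoperimetric E (Sbar k) η hκ0 (hiso k)

/-- Lift and project: if `(η, κ)` satisfies `κ ≥ 0`, `∑ κ ≤ 1` and the weighted
isoperimetric inequalities for all `T` contained in a member of the scale, then for
each `k` there is a pseudo-flow `φ_k` bounded by `κ` whose net supply at each vertex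
of `S̄_k` is at least `η`. -/
theorem stmt15 {V : Type*} [Fintype V] [DecidableEq V]
    (E : Finset (V × V)) (hE : ∀ e ∈ E, e.1 ≠ e.2)
    (Sbar : V → Finset V)
    (η : V → ℝ) (κ : V × V → ℝ)
    (hκ0 : ∀ e, 0 ≤ κ e) (hκ1 : ∑ e ∈ E, κ e ≤ 1)
    (hiso : ∀ k : V, ∀ T ⊆ Sbar k,
      ∑ i ∈ T, η i
        ≤ ∑ e ∈ E.filter fun e => (e.1 ∈ T ∧ e.2 ∉ T) ∨ (e.1 ∉ T ∧ e.2 ∈ T), κ e) :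
    ∀ k : V, ∃ φ : V × V → ℝ,
      (∀ e ∈ E, |φ e| ≤ κ e) ∧
      ∀ i ∈ Sbar k,
        η i ≤ (∑ e ∈ E.filter fun e => e.2 = i, φ e)
          - ∑ e ∈ E.filter fun e => e.1 = i, φ e :=
  stmt15_general E Sbar η κ hκ0 hiso
end
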